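/- arXiv:2102.04297 — 3 statements merged into one kernel-verified Lean document; each statement's English description precedes it below -/
import Mathlib

section
/- Let g : I → ℝ be a C² function on an open interval I with |g''(x)| ≤ C for all x ∈ I. Given η > 0, real numbers x, x̃ ∈ I, a finite sequence z₁,…,zₙ of real numbers, and the two sequences defined by x₀ = x, x_k = x_{k-1} - η g'(x_{k-1}) + η z_k, and x̃₀ = x̃, x̃_k = x̃_{k-1} - η g'(x̃_{k-1}), suppose all iterates x_k, x̃_k lie in I, and suppose there is c̃ > 0 such that η|z₁ + ⋯ + z_k| + |x - x̃| ≤ c̃ for all k = 1,…,n. Then |x_k - x̃_k| ≤ c̃ · exp(η C k) for all k = 1,…,n. -/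
/-!
The difference `dₖ = xₖ - x̃ₖ` telescopes to
`d₀ + η (z₁ + ⋯ + zₖ) - η ∑_{j<k} (g'(xⱼ) - g'(x̃ⱼ))`. Since `|g''| ≤ C`, the mean value theorem
makes `g'` `C`-Lipschitz on `I`, so `|dₖ| ≤ c̃ + η C ∑_{j<k} |dⱼ|`. A discrete Gronwall argument
turns this into `|dₖ| ≤ c̃ (1 + η C)ᵏ ≤ c̃ exp(η C k)`.
-/

open Finset

theorem abs_deriv_sub_le_of_abs_deriv_deriv_le {I : Set ℝ} (hIopen : IsOpen I) (hIconv : Convex ℝ I)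
    {g : ℝ → ℝ} {C : ℝ} (hg : ContDiffOn ℝ 2 g I) (hC : ∀ x ∈ I, |deriv (deriv g) x| ≤ C)
    {a b : ℝ} (ha : a ∈ I) (hb : b ∈ I) :
    |deriv g a - deriv g b| ≤ C * |a - b| := by
  have hg' : DifferentiableOn ℝ (deriv g) I :=
    (hg.deriv_of_isOpen hIopen (by norm_num)).differentiableOn one_ne_zero
  simpa only [Real.norm_eq_abs] using
    hIconv.norm_image_sub_le_of_norm_deriv_le
      (fun y hy => hg'.differentiableAt (hIopen.mem_nhds hy))
      (by simpa only [Real.norm_eq_abs] using hC) hb ha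

theorem le_mul_one_add_pow_of_le_add_mul_sum {a : ℕ → ℝ} {B K : ℝ} {n : ℕ} (hK : 0 ≤ K)
    (h : ∀ m ≤ n, a m ≤ B + K * ∑ j ∈ range m, a j) :
    ∀ m ≤ n, a m ≤ B * (1 + K) ^ m := by
  intro m
  induction m using Nat.strong_induction_on with
  | _ m ih =>
    intro hm
    have hgeom : K * ∑ j ∈ range m, (1 + K) ^ j = (1 + K) ^ m - 1 := by
      rw [mul_comm, ← geom_sum_mul, add_sub_cancel_left]
    calc a m ≤ B + K * ∑ j ∈ range m, a j := h m hm
      _ ≤ B + K * ∑ j ∈ range m, B * (1 + K) ^ j := by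
          gcongr with j hj
          exact ih j (mem_range.1 hj) (by grind)
      _ = B * (1 + K) ^ m := by rw [← mul_sum, mul_left_comm, hgeom]; ring

theorem one_add_pow_le_exp_mul {K : ℝ} (hK : 0 ≤ K) (m : ℕ) :
    (1 + K) ^ m ≤ Real.exp (K * m) := by
  calc (1 + K) ^ m ≤ Real.exp K ^ m := by
        gcongr
        linarith [Real.add_one_le_exp K]
    _ = Real.exp (K * m) := by rw [← Real.exp_nat_mul, mul_comm]

theorem le_mul_exp_of_le_add_mul_sum {a : ℕ → ℝ} {B K : ℝ} {n : ℕ} (hB : 0 ≤ B) (hK : 0 ≤ K)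
    (h : ∀ m ≤ n, a m ≤ B + K * ∑ j ∈ range m, a j) :
    ∀ m ≤ n, a m ≤ B * Real.exp (K * m) := fun m hm =>
  (le_mul_one_add_pow_of_le_add_mul_sum hK h m hm).trans
    (mul_le_mul_of_nonneg_left (one_add_pow_le_exp_mul hK m) hB)

section PerturbedIteration

variable {f : ℝ → ℝ} {η : ℝ} {n : ℕ} {z x y : ℕ → ℝ}

theorem sub_eq_of_perturbed_step
    (hx : ∀ k < n, x (k + 1) = x k - η * f (x k) + η * z (k + 1))
    (hy : ∀ k < n, y (k + 1) = y k - η * f (y k)) :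
    ∀ m ≤ n, x m - y m =
      (x 0 - y 0) + η * ∑ j ∈ Icc 1 m, z j - η * ∑ j ∈ range m, (f (x j) - f (y j)) := by
  intro m hm
  induction m with
  | zero => simp
  | succ m ih =>
    rw [hx m hm, hy m hm, sum_Icc_succ_top (by omega), sum_range_succ]
    linarith [ih (by omega)]

theorem abs_sub_le_of_perturbed_step {C ct : ℝ} (hη : 0 ≤ η)
    (hx : ∀ k < n, x (k + 1) = x k - η * f (x k) + η * z (k + 1))
    (hy : ∀ k < n, y (k + 1) = y k - η * f (y k))
    (hf : ∀ k ≤ n, |f (x k) - f (y k)| ≤ C * |x k - y k|)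
    (hbound : ∀ m ≤ n, η * |∑ j ∈ Icc 1 m, z j| + |x 0 - y 0| ≤ ct) :
    ∀ m ≤ n, |x m - y m| ≤ ct + η * C * ∑ j ∈ range m, |x j - y j| := by
  intro m hm
  have hdrift : |∑ j ∈ range m, (f (x j) - f (y j))| ≤ C * ∑ j ∈ range m, |x j - y j| := by
    rw [mul_sum]
    exact (abs_sum_le_sum_abs _ _).trans (sum_le_sum fun j hj => hf j (by grind))
  rw [sub_eq_of_perturbed_step hx hy m hm, mul_assoc]
  calc _ ≤ |x 0 - y 0 + η * ∑ j ∈ Icc 1 m, z j| + |η * ∑ j ∈ range m, (f (x j) - f (y j))| :=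
        abs_sub _ _
    _ ≤ |x 0 - y 0| + |η * ∑ j ∈ Icc 1 m, z j| + |η * ∑ j ∈ range m, (f (x j) - f (y j))| := by
        gcongr
        exact abs_add_le _ _
    _ = |x 0 - y 0| + η * |∑ j ∈ Icc 1 m, z j| + η * |∑ j ∈ range m, (f (x j) - f (y j))| := by
        rw [abs_mul, abs_mul, abs_of_nonneg hη]
    _ ≤ ct + η * (C * ∑ j ∈ range m, |x j - y j|) := by
        linarith [hbound m hm, mul_le_mul_of_nonneg_left hdrift hη]

end PerturbedIteration

theorem stmt2_general (I : Set ℝ) (hIopen : IsOpen I) (hIconn : I.OrdConnected)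
    (g : ℝ → ℝ) (C : ℝ)
    (hg : ContDiffOn ℝ 2 g I)
    (hC : ∀ x ∈ I, |deriv (deriv g) x| ≤ C)
    (η : ℝ) (hη : 0 < η)
    (n : ℕ) (z : ℕ → ℝ) (x xt : ℕ → ℝ)
    (hx : ∀ k < n, x (k + 1) = x k - η * deriv g (x k) + η * z (k + 1))
    (hxt : ∀ k < n, xt (k + 1) = xt k - η * deriv g (xt k))
    (hmem : ∀ k ≤ n, x k ∈ I ∧ xt k ∈ I)
    (ct : ℝ)
    (hbound : ∀ k, 1 ≤ k → k ≤ n →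
      η * |∑ j ∈ Finset.Icc 1 k, z j| + |x 0 - xt 0| ≤ ct) :
    ∀ k, 1 ≤ k → k ≤ n → |x k - xt k| ≤ ct * Real.exp (η * C * k) := by
  intro k hk1 hkn
  have hC0 : 0 ≤ C := (abs_nonneg _).trans (hC _ (hmem 0 (Nat.zero_le n)).1)
  have hd0 : |x 0 - xt 0| ≤ ct :=
    le_of_add_le_of_nonneg_right (hbound 1 le_rfl (hk1.trans hkn)) (by positivity)
  have hbound_all : ∀ m ≤ n, η * |∑ j ∈ Icc 1 m, z j| + |x 0 - xt 0| ≤ ct := by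
    intro m hm
    rcases Nat.eq_zero_or_pos m with rfl | hm1
    · simpa using hd0
    · exact hbound m hm1 hm
  have hct : 0 ≤ ct := (abs_nonneg _).trans hd0
  refine le_mul_exp_of_le_add_mul_sum hct (mul_nonneg hη.le hC0)
    (abs_sub_le_of_perturbed_step hη.le hx hxt (fun j hj => ?_) hbound_all) k hkn
  exact abs_deriv_sub_le_of_abs_deriv_deriv_le hIopen hIconn.convex hg hC
    (hmem j hj).1 (hmem j hj).2

/-- Discrete Gronwall-type estimate: a perturbed gradient descent recursion stays within
`c̃ · exp(ηCk)` of the unperturbed one, provided the cumulative perturbations plus the initial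
gap are bounded by `c̃`. -/
theorem stmt2 (I : Set ℝ) (hIopen : IsOpen I) (hIconn : I.OrdConnected)
    (g : ℝ → ℝ) (C : ℝ)
    (hg : ContDiffOn ℝ 2 g I)
    (hC : ∀ x ∈ I, |deriv (deriv g) x| ≤ C)
    (η : ℝ) (hη : 0 < η)
    (n : ℕ) (z : ℕ → ℝ) (x xt : ℕ → ℝ)
    (hx : ∀ k < n, x (k + 1) = x k - η * deriv g (x k) + η * z (k + 1))
    (hxt : ∀ k < n, xt (k + 1) = xt k - η * deriv g (xt k))
    (hmem : ∀ k ≤ n, x k ∈ I ∧ xt k ∈ I)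
    (ct : ℝ) (hct : 0 < ct)
    (hbound : ∀ k, 1 ≤ k → k ≤ n →
      η * |∑ j ∈ Finset.Icc 1 k, z j| + |x 0 - xt 0| ≤ ct) :
    ∀ k, 1 ≤ k → k ≤ n → |x k - xt k| ≤ ct * Real.exp (η * C * k) :=
  stmt2_general I hIopen hIconn g C hg hC η hη n z x xt hx hxt hmem ct hbound
end

section
/- For each n ≥ 1 let Y^n be the ((U^n_j)_{j≥0}, (V^n_j)_{j≥0}) jump process and let Y be the ((U_j)_{j≥0}, (V_j)_{j≥0}) jump process. Suppose: (i) U₀ ≡ 0; (ii) the sequence (U^n_0, V^n_0, U^n_1, V^n_1, …) converges in distribution to (0, V_0, U_1, V_1, …); (iii) for every x > 0 and every n ≥ 1, P(U_1 + ⋯ + U_n = x) = 0; (iv) for every x > 0, lim_{n→∞} P(U_1 + ⋯ + U_n > x) = 1. Then for any k ∈ ℕ and any 0 < t_1 < ⋯ < t_k < ∞, the vector (Y^n_{t_1}, …, Y^n_{t_k}) converges in distribution to (Y_{t_1}, …, Y_{t_k}). -/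
open MeasureTheory ProbabilityTheory Filter Set
open scoped Topology ENNReal

/-- The `((U_j), (V_j))` jump process: `Y_t = 0` for `t < U₀`, and otherwise
`Y_t = Σ_j V_j 1_{[U₀+⋯+U_j, U₀+⋯+U_{j+1})}(t)`. -/
noncomputable def jumpProcess (U V : ℕ → ℝ) (t : ℝ) : ℝ :=
  if t < U 0 then 0
  else ∑' j : ℕ,
    V j * Set.indicator
      (Set.Ico (∑ i ∈ Finset.range (j + 1), U i) (∑ i ∈ Finset.range (j + 2), U i))
      (fun _ => (1 : ℝ)) t

/-! The vector `(Y_{t₁}, …, Y_{t_k})` is a fixed map `F` of the interleaved sequence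
`(U₀, V₀, U₁, V₁, …)`, so the claim is a continuous mapping theorem for `F`. The map `F` is not
continuous, but it is continuous at every sequence whose jump times avoid each `tᵢ` and
eventually exceed it: near such a sequence each `tᵢ` stays inside the same interval between
consecutive jump times, so `Y_{tᵢ}` is locally a single coordinate `V_j`. Hypotheses (iii) and
(iv) say that the limit sequence is almost surely of this kind, and the continuous mapping theorem
remains true for maps that are continuous almost surely at the limit. -/

open scoped BoundedContinuousFunction

namespace MeasureTheory

section TendstoInDistribution

variable {ι E Ω' : Type*} {Ω : ι → Type*} {m : ∀ i, MeasurableSpace (Ω i)}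
  {μ : (i : ι) → Measure (Ω i)} [∀ i, IsProbabilityMeasure (μ i)]
  {m' : MeasurableSpace Ω'} {μ' : Measure Ω'} [IsProbabilityMeasure μ']
  {mE : MeasurableSpace E} [TopologicalSpace E] [OpensMeasurableSpace E]
  {X : (i : ι) → Ω i → E} {Z : Ω' → E} {l : Filter ι}

theorem tendstoInDistribution_iff_forall_integral_tendsto
    (hX : ∀ i, AEMeasurable (X i) (μ i)) (hZ : AEMeasurable Z μ') :
    TendstoInDistribution X l Z μ μ' ↔ ∀ f : E →ᵇ ℝ,
      Tendsto (fun i => ∫ ω, f (X i ω) ∂μ i) l (𝓝 (∫ ω, f (Z ω) ∂μ')) := by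
  have hint : ∀ f : E →ᵇ ℝ, (∀ i, ∫ x, f x ∂(μ i).map (X i) = ∫ ω, f (X i ω) ∂μ i) ∧
      ∫ x, f x ∂μ'.map Z = ∫ ω, f (Z ω) ∂μ' := fun f =>
    ⟨fun i => integral_map (hX i) f.continuous.aestronglyMeasurable,
      integral_map hZ f.continuous.aestronglyMeasurable⟩
  refine ⟨fun h f => ?_, fun h => ⟨hX, hZ, ?_⟩⟩
  · simpa only [ProbabilityMeasure.coe_mk, (hint f).1, (hint f).2] using
      ProbabilityMeasure.tendsto_iff_forall_integral_tendsto.mp h.tendsto f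
  · refine ProbabilityMeasure.tendsto_iff_forall_integral_tendsto.mpr fun f => ?_
    simpa only [ProbabilityMeasure.coe_mk, (hint f).1, (hint f).2] using h f

theorem TendstoInDistribution.comp_of_ae_continuousAt [HasOuterApproxClosed E]
    [l.IsCountablyGenerated] {F : Type*} [TopologicalSpace F] [MeasurableSpace F]
    [OpensMeasurableSpace F] {g : E → F} (hg : Measurable g)
    (hcont : ∀ᵐ ω ∂μ', ContinuousAt g (Z ω)) (h : TendstoInDistribution X l Z μ μ') :
    TendstoInDistribution (fun i => g ∘ X i) l (g ∘ Z) μ μ' where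
  forall_aemeasurable i := hg.comp_aemeasurable (h.forall_aemeasurable i)
  aemeasurable_limit := hg.comp_aemeasurable h.aemeasurable_limit
  tendsto := by
    refine tendsto_of_forall_isOpen_le_liminf' fun G hG => ?_
    have hmap : ∀ i, (μ i).map (g ∘ X i) G = (μ i).map (X i) (g ⁻¹' G) := fun i => by
      rw [← AEMeasurable.map_map_of_aemeasurable hg.aemeasurable (h.forall_aemeasurable i),
        Measure.map_apply hg hG.measurableSet]
    have hmap' : μ'.map (g ∘ Z) G = μ'.map Z (g ⁻¹' G) := by
      rw [← AEMeasurable.map_map_of_aemeasurable hg.aemeasurable h.aemeasurable_limit,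
        Measure.map_apply hg hG.measurableSet]
    simp only [ProbabilityMeasure.coe_mk, hmap, hmap']
    -- the discontinuity points of `g` carry no mass, so `g ⁻¹' G` is a.s. in its interior
    calc μ'.map Z (g ⁻¹' G) ≤ μ'.map Z (interior (g ⁻¹' G)) := by
          rw [Measure.map_apply_of_aemeasurable h.aemeasurable_limit (hg hG.measurableSet),
            Measure.map_apply_of_aemeasurable h.aemeasurable_limit isOpen_interior.measurableSet]
          refine measure_mono_ae ?_
          filter_upwards [hcont] with ω hω hωG
          exact mem_interior_iff_mem_nhds.mpr (hω.preimage_mem_nhds (hG.mem_nhds hωG))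
      _ ≤ l.liminf fun i => (μ i).map (X i) (interior (g ⁻¹' G)) :=
          ProbabilityMeasure.le_liminf_measure_open_of_tendsto h.tendsto isOpen_interior
      _ ≤ l.liminf fun i => (μ i).map (X i) (g ⁻¹' G) :=
          liminf_le_liminf (Eventually.of_forall fun i => measure_mono interior_subset)

end TendstoInDistribution

theorem ae_exists_mem_of_tendsto_measure_one {Ω : Type*} [MeasurableSpace Ω] {μ : Measure Ω}
    [IsProbabilityMeasure μ] {A : ℕ → Set Ω} (hA : ∀ n, MeasurableSet (A n))
    (hlim : Tendsto (fun n => (μ (A n)).toReal) atTop (𝓝 1)) :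
    ∀ᵐ ω ∂μ, ∃ n, ω ∈ A n := by
  have hlim' := (ENNReal.tendsto_toReal_iff (fun n => measure_ne_top μ (A n))
    ENNReal.one_ne_top).mp hlim
  have hfull : μ (⋃ n, A n) = 1 := le_antisymm prob_le_one
    (le_of_tendsto' hlim' fun n => measure_mono (subset_iUnion A n))
  have hnull := (prob_compl_eq_zero_iff (MeasurableSet.iUnion hA)).mpr hfull
  filter_upwards [measure_eq_zero_iff_ae_notMem.mp hnull] with ω hω
  simpa using hω

end MeasureTheory

theorem Nat.exists_mem_Ico_succ_of_le_of_exists_lt {α : Type*} [LinearOrder α] {f : ℕ → α}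
    {t : α} (h0 : f 0 ≤ t) (h : ∃ n, t < f n) : ∃ j, t ∈ Ico (f j) (f (j + 1)) := by
  classical
  obtain ⟨j, hj⟩ : ∃ j, Nat.find h = j + 1 :=
    Nat.exists_eq_add_one_of_ne_zero fun h' => (h' ▸ Nat.find_spec h).not_ge h0
  exact ⟨j, not_lt.mp (Nat.find_min h (by omega)), hj ▸ Nat.find_spec h⟩

theorem measurable_tsum_of_summable {α : Type*} [MeasurableSpace α] {f : ℕ → α → ℝ}
    (hf : ∀ j, Measurable (f j)) (hs : ∀ a, Summable fun j => f j a) :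
    Measurable fun a => ∑' j, f j a :=
  measurable_of_tendsto_metrizable (fun _ => Finset.measurable_sum _ fun j _ => hf j)
    (tendsto_pi_nhds.mpr fun a => (hs a).hasSum.tendsto_sum_nat)

section JumpProcess

variable {u v : ℕ → ℝ} {t : ℝ}

theorem monotone_sum_range_of_nonneg (hu : ∀ j, 0 ≤ u j) :
    Monotone fun m => ∑ i ∈ Finset.range m, u i :=
  (Finset.sum_mono_set_of_nonneg hu).comp Finset.range_mono

open Function in
theorem pairwise_disjoint_jumpIntervals (hu : ∀ j, 0 ≤ u j) :
    Pairwise (Disjoint on fun j =>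
      Ico (∑ i ∈ Finset.range (j + 1), u i) (∑ i ∈ Finset.range (j + 2), u i)) :=
  ((monotone_sum_range_of_nonneg hu).comp fun _ _ => Nat.succ_le_succ)
    |>.pairwise_disjoint_on_Ico_succ

theorem jumpTerm_eq_zero_of_ne (hu : ∀ j, 0 ≤ u j) {j j' : ℕ}
    (ht : t ∈ Ico (∑ i ∈ Finset.range (j + 1), u i) (∑ i ∈ Finset.range (j + 2), u i))
    (hj : j' ≠ j) :
    v j' * Set.indicator
      (Ico (∑ i ∈ Finset.range (j' + 1), u i) (∑ i ∈ Finset.range (j' + 2), u i))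
      (fun _ => (1 : ℝ)) t = 0 := by
  rw [indicator_of_notMem (disjoint_left.mp (pairwise_disjoint_jumpIntervals hu hj.symm) ht),
    mul_zero]

theorem summable_jumpTerms (hu : ∀ j, 0 ≤ u j) :
    Summable fun j => v j * Set.indicator
      (Ico (∑ i ∈ Finset.range (j + 1), u i) (∑ i ∈ Finset.range (j + 2), u i))
      (fun _ => (1 : ℝ)) t := by
  by_cases h : ∃ j, t ∈ Ico (∑ i ∈ Finset.range (j + 1), u i) (∑ i ∈ Finset.range (j + 2), u i)
  · obtain ⟨j, hj⟩ := h
    exact (hasSum_single j fun j' hj' => jumpTerm_eq_zero_of_ne hu hj hj').summable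
  · simp only [not_exists] at h
    simp only [indicator_of_notMem (h _), mul_zero]
    exact summable_zero

theorem jumpProcess_eq_of_mem_Ico (hu : ∀ j, 0 ≤ u j) {j : ℕ}
    (ht : t ∈ Ico (∑ i ∈ Finset.range (j + 1), u i) (∑ i ∈ Finset.range (j + 2), u i)) :
    jumpProcess u v t = v j := by
  have hu0 : u 0 ≤ ∑ i ∈ Finset.range (j + 1), u i := by
    simpa using monotone_sum_range_of_nonneg hu (Nat.le_add_left 1 j)
  rw [jumpProcess, if_neg (not_lt.mpr (hu0.trans ht.1)),
    tsum_eq_single j fun j' hj' => jumpTerm_eq_zero_of_ne hu ht hj', indicator_of_mem ht,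
    mul_one]

theorem measurable_jumpProcess {α : Type*} [MeasurableSpace α] {u v : α → ℕ → ℝ}
    (hu : ∀ j, Measurable fun a => u a j) (hv : ∀ j, Measurable fun a => v a j)
    (hu0 : ∀ a j, 0 ≤ u a j) (t : ℝ) : Measurable fun a => jumpProcess (u a) (v a) t := by
  have hS : ∀ m, Measurable fun a => ∑ i ∈ Finset.range m, u a i := fun m =>
    Finset.measurable_sum _ fun i _ => hu i
  refine Measurable.ite (measurableSet_lt measurable_const (hu 0)) measurable_const
    (measurable_tsum_of_summable (fun j => (hv j).mul ?_) fun a => summable_jumpTerms (hu0 a))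
  simp only [indicator_apply, mem_Ico]
  exact Measurable.ite ((measurableSet_le (hS _) measurable_const).inter
    (measurableSet_lt measurable_const (hS _))) measurable_const measurable_const

theorem continuousAt_jumpProcess {α : Type*} [TopologicalSpace α] {u v : α → ℕ → ℝ}
    (hu : ∀ j, Continuous fun a => u a j) (hv : ∀ j, Continuous fun a => v a j)
    (hu0 : ∀ a j, 0 ≤ u a j) {a : α} {t : ℝ}
    (hne : ∀ n, ∑ i ∈ Finset.range (n + 1), u a i ≠ t)
    (hlt : ∃ n, t < ∑ i ∈ Finset.range (n + 1), u a i) :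
    ContinuousAt (fun a => jumpProcess (u a) (v a) t) a := by
  have hS : ∀ m, Continuous fun a => ∑ i ∈ Finset.range m, u a i := fun m =>
    continuous_finsetSum _ fun i _ => hu i
  rcases lt_or_ge t (u a 0) with h0 | h0
  · refine continuousAt_const.congr (f := fun _ => (0 : ℝ)) ?_
    filter_upwards [(isOpen_lt continuous_const (hu 0)).mem_nhds h0] with b hb
    exact (if_pos hb).symm
  · obtain ⟨j, hj⟩ := Nat.exists_mem_Ico_succ_of_le_of_exists_lt
      (f := fun n => ∑ i ∈ Finset.range (n + 1), u a i) (by simpa using h0) hlt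
    -- `t` lies strictly inside the `j`-th interval, so it stays there under small perturbations
    have hj' : a ∈ {b | ∑ i ∈ Finset.range (j + 1), u b i < t ∧
        t < ∑ i ∈ Finset.range (j + 2), u b i} := ⟨lt_of_le_of_ne hj.1 (hne j), hj.2⟩
    refine (hv j).continuousAt.congr ?_
    filter_upwards [((isOpen_lt (hS _) continuous_const).inter
      (isOpen_lt continuous_const (hS _))).mem_nhds hj'] with b hb
    exact (jumpProcess_eq_of_mem_Ico (hu0 b) ⟨hb.1.le, hb.2⟩).symm

end JumpProcess

def interleave (u v : ℕ → ℝ) : ℕ → ℝ := fun k => if Even k then u (k / 2) else v (k / 2)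

@[simp]
theorem interleave_two_mul (u v : ℕ → ℝ) (j : ℕ) : interleave u v (2 * j) = u j := by
  simp [interleave]

@[simp]
theorem interleave_two_mul_add_one (u v : ℕ → ℝ) (j : ℕ) : interleave u v (2 * j + 1) = v j := by
  simp [interleave, Nat.mul_add_div]

theorem measurable_interleave {α : Type*} [MeasurableSpace α] {u v : α → ℕ → ℝ}
    (hu : ∀ j, Measurable fun a => u a j) (hv : ∀ j, Measurable fun a => v a j) :
    Measurable fun a => interleave (u a) (v a) :=
  measurable_pi_lambda _ fun _ => Measurable.ite (.const _) (hu _) (hv _)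

/-- Waiting times are clamped at `0` so that the jump times are nondecreasing on the whole
sequence space, not only on the support of the laws. -/
noncomputable def jumpProcessOfInterleaved (t : ℝ) (s : ℕ → ℝ) : ℝ :=
  jumpProcess (fun j => max (s (2 * j)) 0) (fun j => s (2 * j + 1)) t

theorem jumpProcessOfInterleaved_interleave {u : ℕ → ℝ} (hu : ∀ j, 0 ≤ u j) (v : ℕ → ℝ)
    (t : ℝ) : jumpProcessOfInterleaved t (interleave u v) = jumpProcess u v t := by
  simp only [jumpProcessOfInterleaved, interleave_two_mul, interleave_two_mul_add_one,
    max_eq_left (hu _)]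

theorem measurable_jumpProcessOfInterleaved (t : ℝ) :
    Measurable (jumpProcessOfInterleaved t) :=
  measurable_jumpProcess (fun _ => (measurable_pi_apply _).max measurable_const)
    (fun _ => measurable_pi_apply _) (fun _ _ => le_max_right _ _) t

theorem continuousAt_jumpProcessOfInterleaved {u : ℕ → ℝ} (hu : ∀ j, 0 ≤ u j) (v : ℕ → ℝ)
    {t : ℝ} (hne : ∀ n, ∑ i ∈ Finset.range (n + 1), u i ≠ t)
    (hlt : ∃ n, t < ∑ i ∈ Finset.range (n + 1), u i) :
    ContinuousAt (jumpProcessOfInterleaved t) (interleave u v) :=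
  continuousAt_jumpProcess (u := fun (s : ℕ → ℝ) j => max (s (2 * j)) 0)
    (v := fun s j => s (2 * j + 1))
    (fun _ => (continuous_apply _).max continuous_const) (fun _ => continuous_apply _)
    (fun _ _ => le_max_right _ _)
    (by simpa only [interleave_two_mul, max_eq_left (hu _)] using hne)
    (by simpa only [interleave_two_mul, max_eq_left (hu _)] using hlt)

theorem ae_continuousAt_jumpProcessOfInterleaved {Ω : Type*} [MeasurableSpace Ω]
    {μ : Measure Ω} [IsProbabilityMeasure μ] {U V : ℕ → Ω → ℝ} (hmeasU : ∀ j, Measurable (U j))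
    (hUnonneg : ∀ j ω, 0 ≤ U j ω) (hU0 : ∀ ω, U 0 ω = 0) {t : ℝ} (ht : 0 < t)
    (hnoatom : ∀ n, 1 ≤ n → μ {ω | ∑ i ∈ Finset.Icc 1 n, U i ω = t} = 0)
    (hdiverge : Tendsto (fun n => (μ {ω | t < ∑ i ∈ Finset.Icc 1 n, U i ω}).toReal)
      atTop (𝓝 1)) :
    ∀ᵐ ω ∂μ, ContinuousAt (jumpProcessOfInterleaved t)
      (interleave (fun j => U j ω) (fun j => V j ω)) := by
  have hsum : ∀ ω n, ∑ i ∈ Finset.range (n + 1), U i ω = ∑ i ∈ Finset.Icc 1 n, U i ω := by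
    intro ω n
    rw [Finset.range_eq_Ico, Finset.sum_eq_sum_Ico_succ_bot n.succ_pos, hU0, zero_add]
    rfl
  have hne : ∀ᵐ ω ∂μ, ∀ n, ∑ i ∈ Finset.Icc 1 n, U i ω ≠ t := by
    refine ae_all_iff.mpr fun n => ?_
    rcases Nat.eq_zero_or_pos n with rfl | hn
    · exact ae_of_all _ fun ω => by simpa using ht.ne
    · exact measure_eq_zero_iff_ae_notMem.mp (hnoatom n hn)
  have hlt : ∀ᵐ ω ∂μ, ∃ n, t < ∑ i ∈ Finset.Icc 1 n, U i ω :=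
    ae_exists_mem_of_tendsto_measure_one
      (fun n => measurableSet_lt measurable_const (Finset.measurable_sum _ fun j _ => hmeasU j))
      hdiverge
  filter_upwards [hne, hlt] with ω hne hlt
  exact continuousAt_jumpProcessOfInterleaved (fun j => hUnonneg j ω) _
    (by simpa only [hsum] using hne) (by simpa only [hsum] using hlt)

theorem stmt8_general {Ω : Type*} [MeasureSpace Ω] [IsProbabilityMeasure (volume : Measure Ω)]
    (Un Vn : ℕ → ℕ → Ω → ℝ) (U V : ℕ → Ω → ℝ)
    (hmeasUn : ∀ n j, Measurable (Un n j)) (hmeasVn : ∀ n j, Measurable (Vn n j))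
    (hmeasU : ∀ j, Measurable (U j)) (hmeasV : ∀ j, Measurable (V j))
    (hUnnonneg : ∀ n j ω, 0 ≤ Un n j ω)
    (hUnonneg : ∀ j ω, 0 ≤ U j ω)
    (hU0 : ∀ ω, U 0 ω = 0)
    (hconv : ∀ φ : BoundedContinuousFunction (ℕ → ℝ) ℝ,
      Tendsto (fun n => ∫ ω, φ (fun k => if Even k then Un n (k / 2) ω else Vn n (k / 2) ω))
        atTop (𝓝 (∫ ω, φ (fun k => if Even k then U (k / 2) ω else V (k / 2) ω))))
    (hnoatom : ∀ x > (0 : ℝ), ∀ n, 1 ≤ n →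
      volume {ω | ∑ i ∈ Finset.Icc 1 n, U i ω = x} = 0)
    (hdiverge : ∀ x > (0 : ℝ),
      Tendsto (fun n => (volume {ω | x < ∑ i ∈ Finset.Icc 1 n, U i ω}).toReal)
        atTop (𝓝 1)) :
    ∀ (k : ℕ) (t : Fin k → ℝ), (∀ i, 0 < t i) → StrictMono t →
      ∀ φ : BoundedContinuousFunction (Fin k → ℝ) ℝ,
        Tendsto (fun n => ∫ ω, φ (fun i =>
            jumpProcess (fun j => Un n j ω) (fun j => Vn n j ω) (t i)))
          atTop (𝓝 (∫ ω, φ (fun i =>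
            jumpProcess (fun j => U j ω) (fun j => V j ω) (t i)))) := by
  intro k t ht _ φ
  set X : ℕ → Ω → ℕ → ℝ := fun n ω => interleave (fun j => Un n j ω) (fun j => Vn n j ω)
  set Y : Ω → ℕ → ℝ := fun ω => interleave (fun j => U j ω) (fun j => V j ω)
  have hX : ∀ n, AEMeasurable (X n) :=
    fun n => (measurable_interleave (hmeasUn n) (hmeasVn n)).aemeasurable
  have hY : AEMeasurable Y := (measurable_interleave hmeasU hmeasV).aemeasurable
  have hdist : TendstoInDistribution X atTop Y (fun _ => volume) :=
    (tendstoInDistribution_iff_forall_integral_tendsto hX hY).mpr hconv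
  have hcont : ∀ᵐ ω, ContinuousAt (fun s i => jumpProcessOfInterleaved (t i) s) (Y ω) := by
    filter_upwards [ae_all_iff.mpr fun i => ae_continuousAt_jumpProcessOfInterleaved hmeasU
      hUnonneg hU0 (ht i) (hnoatom _ (ht i)) (hdiverge _ (ht i))] with ω hω
    exact continuousAt_pi.mpr hω
  have hlim := hdist.comp_of_ae_continuousAt
    (measurable_pi_lambda _ fun i => measurable_jumpProcessOfInterleaved (t i)) hcont
  simpa only [X, Y, Function.comp_def, jumpProcessOfInterleaved_interleave, hUnnonneg, hUnonneg,
    implies_true] using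
    (tendstoInDistribution_iff_forall_integral_tendsto hlim.forall_aemeasurable
      hlim.aemeasurable_limit).mp hlim φ

/-- Convergence of finite-dimensional distributions of jump processes: if the interleaved
jump times and locations converge in distribution (in the product topology), the limit jump
times are atomless and divergent, and `U₀ ≡ 0` for the limit, then
`(Y^n_{t₁},…,Y^n_{t_k}) ⇒ (Y_{t₁},…,Y_{t_k})` for all `0 < t₁ < ⋯ < t_k`. -/
theorem stmt8 {Ω : Type*} [MeasureSpace Ω] [IsProbabilityMeasure (volume : Measure Ω)]
    (Un Vn : ℕ → ℕ → Ω → ℝ) (U V : ℕ → Ω → ℝ)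
    (hmeasUn : ∀ n j, Measurable (Un n j)) (hmeasVn : ∀ n j, Measurable (Vn n j))
    (hmeasU : ∀ j, Measurable (U j)) (hmeasV : ∀ j, Measurable (V j))
    (hUnnonneg : ∀ n j ω, 0 ≤ Un n j ω)
    (hUnpos : ∀ n j, 1 ≤ j → ∀ᵐ ω, 0 < Un n j ω)
    (hUnonneg : ∀ j ω, 0 ≤ U j ω)
    (hU0 : ∀ ω, U 0 ω = 0)
    (hUpos : ∀ j, 1 ≤ j → ∀ᵐ ω, 0 < U j ω)
    (hconv : ∀ φ : BoundedContinuousFunction (ℕ → ℝ) ℝ,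
      Tendsto (fun n => ∫ ω, φ (fun k => if Even k then Un n (k / 2) ω else Vn n (k / 2) ω))
        atTop (𝓝 (∫ ω, φ (fun k => if Even k then U (k / 2) ω else V (k / 2) ω))))
    (hnoatom : ∀ x > (0 : ℝ), ∀ n, 1 ≤ n →
      volume {ω | ∑ i ∈ Finset.Icc 1 n, U i ω = x} = 0)
    (hdiverge : ∀ x > (0 : ℝ),
      Tendsto (fun n => (volume {ω | x < ∑ i ∈ Finset.Icc 1 n, U i ω}).toReal)
        atTop (𝓝 1)) :
    ∀ (k : ℕ) (t : Fin k → ℝ), (∀ i, 0 < t i) → StrictMono t →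
      ∀ φ : BoundedContinuousFunction (Fin k → ℝ) ℝ,
        Tendsto (fun n => ∫ ω, φ (fun i =>
            jumpProcess (fun j => Un n j ω) (fun j => Vn n j ω) (t i)))
          atTop (𝓝 (∫ ω, φ (fun i =>
            jumpProcess (fun j => U j ω) (fun j => V j ω) (t i)))) :=
  stmt8_general Un Vn U V hmeasUn hmeasVn hmeasU hmeasV hUnnonneg hUnonneg hU0 hconv hnoatom
    hdiverge
end

section
/- Let f : ℝ → ℝ be C² with local minimum at 0, f''(0) > 0, and suppose |f'(x)| ≥ c₀|x| for |x| ≤ ε₀. Let y^η_n be gradient descent y^η_{n+1} = y^η_n - η f'(y^η_n) started at x with |x| ≤ 2ε where 3ε < ε₀. Then for all sufficiently small η > 0: |y^η_n| ≤ 2ε for all n ≥ 0, the sequence |y^η_n| is non-increasing, and |y^η_{⌈(1/η)^β⌉}| ≤ ε for any fixed β > 1. -/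
/-!
Since `|f' x| ≥ c₀ |x|` on `[-ε₀, ε₀]`, the derivative `f'` vanishes there only at `0`, so by
the intermediate value theorem it has constant sign on each side of `0`; the local minimum
forces that sign to be the sign of `x`, whence `x f'(x) ≥ c₀ x²`. As `f'` is Lipschitz with
`f'(0) = 0`, also `|f'(x)| ≤ M |x|`, and expanding the square gives
`|x - η f'(x)| ≤ (1 - η c₀ / 2) |x|` as soon as `η M² ≤ c₀`: the iterates contract
geometrically. After `N = ⌈η^(-β)⌉` steps the factor is at most `exp (-(c₀ / 2) η^(1 - β))`,
which is below `1 / 2` for small `η` because `β > 1`.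
-/

open Filter Set Topology

section LocalMinSign

variable {f : ℝ → ℝ} {r : ℝ}

theorem deriv_pos_of_isLocalMin (hf : Continuous f) (hf' : Continuous (deriv f))
    (hmin : IsLocalMin f 0) (hne : ∀ x ∈ Ioc 0 r, deriv f x ≠ 0) {x : ℝ} (hx : x ∈ Ioc 0 r) :
    0 < deriv f x := by
  by_contra! hle
  have hneg : ∀ t ∈ Ioc 0 x, deriv f t < 0 := by
    intro t ht
    by_contra! hge
    obtain ⟨s, hs, hs0⟩ : (0 : ℝ) ∈ deriv f '' uIcc t x :=
      intermediate_value_uIcc hf'.continuousOn (mem_uIcc.2 (Or.inr ⟨hle, hge⟩))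
    rw [uIcc_of_le ht.2] at hs
    exact hne s ⟨ht.1.trans_le hs.1, hs.2.trans hx.2⟩ hs0
  have hanti : StrictAntiOn f (Icc 0 x) :=
    strictAntiOn_of_deriv_neg (convex_Icc 0 x) hf.continuousOn fun t ht => by
      rw [interior_Icc] at ht
      exact hneg t ⟨ht.1, ht.2.le⟩
  obtain ⟨t, hft, ht⟩ :=
    ((hmin.filter_mono nhdsWithin_le_nhds).and (Ioo_mem_nhdsGT hx.1)).exists
  exact (hanti ⟨le_rfl, hx.1.le⟩ ⟨ht.1.le, ht.2.le⟩ ht.1).not_ge hft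

theorem deriv_neg_of_isLocalMin (hf : Continuous f) (hf' : Continuous (deriv f))
    (hmin : IsLocalMin f 0) (hne : ∀ x ∈ Ico (-r) 0, deriv f x ≠ 0) {x : ℝ}
    (hx : x ∈ Ico (-r) 0) : deriv f x < 0 := by
  have hderiv : deriv (fun t => f (-t)) = fun t => -deriv f (-t) :=
    funext fun t => deriv_comp_neg f t
  have hmin' : IsLocalMin (fun t => f (-t)) 0 :=
    (neg_zero (G := ℝ) ▸ hmin).comp_continuous continuous_neg.continuousAt
  have hne' : ∀ t ∈ Ioc 0 r, deriv (fun t => f (-t)) t ≠ 0 := fun t ht => by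
    rw [hderiv]
    exact neg_ne_zero.2 (hne (-t) ⟨neg_le_neg ht.2, neg_neg_of_pos ht.1⟩)
  have := deriv_pos_of_isLocalMin (f := fun t => f (-t)) (hf.comp continuous_neg)
    (hderiv ▸ (hf'.comp continuous_neg).neg) hmin' hne' (x := -x)
    ⟨neg_pos_of_neg hx.2, neg_le.1 hx.1⟩
  simpa only [hderiv, neg_neg, neg_pos] using this

theorem mul_sq_le_mul_deriv_of_isLocalMin {c : ℝ} (hf : Continuous f)
    (hf' : Continuous (deriv f)) (hmin : IsLocalMin f 0) (hc : 0 < c)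
    (hgrad : ∀ x, |x| ≤ r → c * |x| ≤ |deriv f x|) {x : ℝ} (hx : |x| ≤ r) :
    c * x ^ 2 ≤ x * deriv f x := by
  have hne : ∀ x, |x| ≤ r → x ≠ 0 → deriv f x ≠ 0 := fun x hx hx0 hd => by
    have := hgrad x hx
    rw [hd, abs_zero] at this
    exact this.not_gt (mul_pos hc (abs_pos.2 hx0))
  have hr : 0 ≤ r := (abs_nonneg x).trans hx
  have hsign : 0 ≤ x * deriv f x := by
    rcases lt_trichotomy x 0 with h | rfl | h
    · refine mul_nonneg_of_nonpos_of_nonpos h.le (deriv_neg_of_isLocalMin hf hf' hmin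
        (fun t ht => hne t (abs_le.2 ⟨ht.1, by linarith [ht.2, hr]⟩) ht.2.ne) ?_).le
      exact ⟨(abs_le.1 hx).1, h⟩
    · simp
    · refine mul_nonneg h.le (deriv_pos_of_isLocalMin hf hf' hmin
        (fun t ht => hne t (abs_le.2 ⟨by linarith [ht.1, hr], ht.2⟩) ht.1.ne') ?_).le
      exact ⟨h, (abs_le.1 hx).2⟩
  calc c * x ^ 2 = |x| * (c * |x|) := by rw [← sq_abs]; ring
    _ ≤ |x| * |deriv f x| := by gcongr; exact hgrad x hx
    _ = x * deriv f x := by rw [← abs_mul, abs_of_nonneg hsign]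

end LocalMinSign

theorem exists_norm_le_mul_norm_of_contDiff {E F : Type*} [NormedAddCommGroup E]
    [NormedSpace ℝ E] [ProperSpace E] [NormedAddCommGroup F] [NormedSpace ℝ F] {g : E → F}
    (hg : ContDiff ℝ 1 g) (hg0 : g 0 = 0) (r : ℝ) :
    ∃ M : ℝ, ∀ z, ‖z‖ ≤ r → ‖g z‖ ≤ M * ‖z‖ := by
  obtain ⟨K, hK⟩ := hg.locallyLipschitz.locallyLipschitzOn.exists_lipschitzOnWith_of_compact
    (isCompact_closedBall (0 : E) r)
  refine ⟨K, fun z hz => ?_⟩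
  have h0 : (0 : E) ∈ Metric.closedBall 0 r := by simpa using (norm_nonneg z).trans hz
  simpa [dist_eq_norm, hg0] using hK.dist_le_mul z (by simpa using hz) 0 h0

theorem abs_sub_mul_le_of_coercive {z g c M η : ℝ} (hcoer : c * z ^ 2 ≤ z * g)
    (hlip : |g| ≤ M * |z|) (hη : 0 ≤ η) (hηM : η * M ^ 2 ≤ c) (hηc : η * c ≤ 2) :
    |z - η * g| ≤ (1 - η * (c / 2)) * |z| := by
  have hg2 : g ^ 2 ≤ M ^ 2 * z ^ 2 := by
    simpa only [sq_abs, mul_pow] using pow_le_pow_left₀ (abs_nonneg g) hlip 2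
  refine abs_le_of_sq_le_sq ?_ (mul_nonneg (by linarith) (abs_nonneg z))
  rw [mul_pow, sq_abs]
  nlinarith [mul_le_mul_of_nonneg_left hg2 (sq_nonneg η), mul_le_mul_of_nonneg_left hcoer hη,
    mul_le_mul_of_nonneg_right hηM (mul_nonneg hη (sq_nonneg z)), sq_nonneg (η * c * z)]

section Contracting

variable {E : Type*} [SeminormedAddGroup E] {T : E → E} {q R : ℝ} {y : ℕ → E}

theorem norm_le_pow_mul_of_contracting (hq0 : 0 ≤ q) (hq1 : q ≤ 1)
    (hT : ∀ z, ‖z‖ ≤ R → ‖T z‖ ≤ q * ‖z‖) (hy : ∀ n, y (n + 1) = T (y n)) (h0 : ‖y 0‖ ≤ R)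
    (n : ℕ) : ‖y n‖ ≤ q ^ n * ‖y 0‖ := by
  induction n with
  | zero => simp
  | succ n ih =>
    have hR : ‖y n‖ ≤ R :=
      ih.trans ((mul_le_of_le_one_left (norm_nonneg _) (pow_le_one₀ hq0 hq1)).trans h0)
    calc ‖y (n + 1)‖ ≤ q * ‖y n‖ := by rw [hy n]; exact hT _ hR
      _ ≤ q * (q ^ n * ‖y 0‖) := by gcongr
      _ = q ^ (n + 1) * ‖y 0‖ := by ring

theorem norm_le_of_contracting (hq0 : 0 ≤ q) (hq1 : q ≤ 1)
    (hT : ∀ z, ‖z‖ ≤ R → ‖T z‖ ≤ q * ‖z‖) (hy : ∀ n, y (n + 1) = T (y n)) (h0 : ‖y 0‖ ≤ R)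
    (n : ℕ) : ‖y n‖ ≤ R :=
  (norm_le_pow_mul_of_contracting hq0 hq1 hT hy h0 n).trans
    ((mul_le_of_le_one_left (norm_nonneg _) (pow_le_one₀ hq0 hq1)).trans h0)

theorem norm_succ_le_of_contracting (hq0 : 0 ≤ q) (hq1 : q ≤ 1)
    (hT : ∀ z, ‖z‖ ≤ R → ‖T z‖ ≤ q * ‖z‖) (hy : ∀ n, y (n + 1) = T (y n)) (h0 : ‖y 0‖ ≤ R)
    (n : ℕ) : ‖y (n + 1)‖ ≤ ‖y n‖ := by
  rw [hy n]
  exact (hT _ (norm_le_of_contracting hq0 hq1 hT hy h0 n)).trans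
    (mul_le_of_le_one_left (norm_nonneg _) hq1)

end Contracting

theorem one_sub_mul_pow_ceil_rpow_le_exp {c β η : ℝ} (hc : 0 ≤ c) (hη : 0 < η)
    (hηc : η * c ≤ 1) :
    (1 - η * c) ^ ⌈(1 / η) ^ β⌉₊ ≤ Real.exp (-(c * (1 / η) ^ (β - 1))) := by
  set N := ⌈(1 / η) ^ β⌉₊
  calc (1 - η * c) ^ N ≤ Real.exp (-(η * c)) ^ N :=
        pow_le_pow_left₀ (sub_nonneg.2 hηc) (by linarith [Real.add_one_le_exp (-(η * c))]) N
    _ = Real.exp (-(η * c * N)) := by rw [← Real.exp_nat_mul]; ring_nf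
    _ ≤ Real.exp (-(c * (1 / η) ^ (β - 1))) := by
      refine Real.exp_le_exp.2 (neg_le_neg ?_)
      calc c * (1 / η) ^ (β - 1) = η * c * (1 / η) ^ β := by
            rw [Real.rpow_sub_one (by positivity)]; field_simp
        _ ≤ η * c * N := by gcongr; exact Nat.le_ceil _

theorem tendsto_one_sub_mul_pow_ceil_rpow {c β : ℝ} (hc : 0 < c) (hβ : 1 < β) :
    Tendsto (fun η : ℝ => (1 - η * c) ^ ⌈(1 / η) ^ β⌉₊) (𝓝[>] 0) (𝓝 0) := by
  have hη : Tendsto (fun η : ℝ => η * c) (𝓝[>] 0) (𝓝 0) := by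
    simpa using ((continuous_mul_const c).tendsto 0).mono_left nhdsWithin_le_nhds
  have hsmall : ∀ᶠ η in 𝓝[>] (0 : ℝ), 0 < η ∧ η * c ≤ 1 :=
    eventually_mem_nhdsWithin.and (hη.eventually (eventually_le_nhds one_pos))
  have hexp : Tendsto (fun η : ℝ => Real.exp (-(c * (1 / η) ^ (β - 1)))) (𝓝[>] 0) (𝓝 0) :=
    Real.tendsto_exp_neg_atTop_nhds_zero.comp <| Tendsto.const_mul_atTop hc <|
      (tendsto_rpow_atTop (sub_pos.2 hβ)).comp
        (tendsto_inv_nhdsGT_zero.congr fun η => (one_div η).symm)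
  refine tendsto_of_tendsto_of_tendsto_of_le_of_le' tendsto_const_nhds hexp
    (hsmall.mono fun η h => pow_nonneg (sub_nonneg.2 h.2) _)
    (hsmall.mono fun η h => one_sub_mul_pow_ceil_rpow_le_exp hc.le h.1 h.2)

theorem stmt17_general (f : ℝ → ℝ) (hf : ContDiff ℝ 2 f)
    (hcrit : deriv f 0 = 0) (hlocmin : IsLocalMin f 0)
    (c₀ ε₀ : ℝ) (hc₀ : 0 < c₀)
    (hgrad : ∀ x : ℝ, |x| ≤ ε₀ → c₀ * |x| ≤ |deriv f x|)
    (ε : ℝ) (hε : 0 < ε) (hεε₀ : 3 * ε < ε₀)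
    (β : ℝ) (hβ : 1 < β) :
    ∃ η₀ > (0 : ℝ), ∀ η ∈ Ioo (0 : ℝ) η₀, ∀ x : ℝ, |x| ≤ 2 * ε →
      ∀ y : ℕ → ℝ, y 0 = x → (∀ n : ℕ, y (n + 1) = y n - η * deriv f (y n)) →
        (∀ n : ℕ, |y n| ≤ 2 * ε) ∧ (∀ n : ℕ, |y (n + 1)| ≤ |y n|) ∧
          |y ⌈(1 / η) ^ β⌉₊| ≤ ε := by
  have hf' : ContDiff ℝ 1 (deriv f) := hf.deriv'
  obtain ⟨M, hM⟩ := exists_norm_le_mul_norm_of_contDiff hf' hcrit ε₀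
  simp only [Real.norm_eq_abs] at hM
  have hsmall : ∀ᶠ η in 𝓝[>] (0 : ℝ), η * M ^ 2 ≤ c₀ ∧ η * c₀ ≤ 2 := by
    have hη : Tendsto (fun η : ℝ => η) (𝓝[>] 0) (𝓝 0) := nhdsWithin_le_nhds
    exact ((hη.mul_const _).eventually (eventually_le_nhds (by simpa using hc₀))).and
      ((hη.mul_const _).eventually (eventually_le_nhds (by norm_num)))
  have hhalf : ∀ᶠ η in 𝓝[>] (0 : ℝ), (1 - η * (c₀ / 2)) ^ ⌈(1 / η) ^ β⌉₊ ≤ 1 / 2 :=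
    (tendsto_one_sub_mul_pow_ceil_rpow (half_pos hc₀) hβ).eventually
      (eventually_le_nhds one_half_pos)
  obtain ⟨η₀, hη₀, hsub⟩ := mem_nhdsGT_iff_exists_Ioo_subset.mp (hsmall.and hhalf)
  refine ⟨η₀, hη₀, fun η hη x hx y hy0 hy => ?_⟩
  obtain ⟨⟨hηM, hηc⟩, hpow⟩ := hsub hη
  have hq0 : 0 ≤ 1 - η * (c₀ / 2) := by linarith
  have hq1 : 1 - η * (c₀ / 2) ≤ 1 := by linarith [mul_pos hη.1 (half_pos hc₀)]
  set q := 1 - η * (c₀ / 2)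
  have hstep : ∀ z : ℝ, ‖z‖ ≤ 2 * ε → ‖z - η * deriv f z‖ ≤ q * ‖z‖ := fun z hz => by
    simp only [Real.norm_eq_abs] at hz ⊢
    have hz' : |z| ≤ ε₀ := by linarith
    exact abs_sub_mul_le_of_coercive
      (mul_sq_le_mul_deriv_of_isLocalMin hf.continuous hf'.continuous hlocmin hc₀ hgrad hz')
      (hM z hz') hη.1.le hηM hηc
  have h0 : ‖y 0‖ ≤ 2 * ε := by rwa [hy0, Real.norm_eq_abs]
  refine ⟨fun n => ?_, fun n => ?_, ?_⟩
  · simpa only [Real.norm_eq_abs] using norm_le_of_contracting hq0 hq1 hstep hy h0 n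
  · simpa only [Real.norm_eq_abs] using norm_succ_le_of_contracting hq0 hq1 hstep hy h0 n
  · calc |y ⌈(1 / η) ^ β⌉₊| ≤ q ^ ⌈(1 / η) ^ β⌉₊ * ‖y 0‖ :=
          norm_le_pow_mul_of_contracting hq0 hq1 hstep hy h0 _
      _ ≤ 1 / 2 * (2 * ε) := mul_le_mul hpow h0 (norm_nonneg _) (by norm_num)
      _ = ε := by ring

/-- Gradient descent contraction near a nondegenerate local minimum at `0`: started in the
`2ε`-neighborhood, for all sufficiently small `η` the iterates remain in the
`2ε`-neighborhood, `|y_n|` is non-increasing, and after `⌈(1/η)^β⌉` steps the iterate is in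
the `ε`-neighborhood. -/
theorem stmt17 (f : ℝ → ℝ) (hf : ContDiff ℝ 2 f)
    (hcrit : deriv f 0 = 0) (hlocmin : IsLocalMin f 0)
    (hf'' : 0 < deriv (deriv f) 0)
    (c₀ ε₀ : ℝ) (hc₀ : 0 < c₀) (hε₀ : 0 < ε₀)
    (hgrad : ∀ x : ℝ, |x| ≤ ε₀ → c₀ * |x| ≤ |deriv f x|)
    (ε : ℝ) (hε : 0 < ε) (hεε₀ : 3 * ε < ε₀)
    (β : ℝ) (hβ : 1 < β) :
    ∃ η₀ > (0 : ℝ), ∀ η ∈ Ioo (0 : ℝ) η₀, ∀ x : ℝ, |x| ≤ 2 * ε →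
      ∀ y : ℕ → ℝ, y 0 = x → (∀ n : ℕ, y (n + 1) = y n - η * deriv f (y n)) →
        (∀ n : ℕ, |y n| ≤ 2 * ε) ∧ (∀ n : ℕ, |y (n + 1)| ≤ |y n|) ∧
          |y ⌈(1 / η) ^ β⌉₊| ≤ ε :=
  stmt17_general f hf hcrit hlocmin c₀ ε₀ hc₀ hgrad ε hε hεε₀ β hβ
end
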